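/- Let n ≥ 3 and let S = {σ_{p,q} : 1 ≤ p ≠ q ≤ n} be the standard generating set of the affine cactus group AJ_n. Then the girth of the Cayley graph Cay(AJ_n, S) equals 4. Concretely: (a) a ≠ e for every a ∈ S; (b) ab ≠ e for all a, b ∈ S with a ≠ b; (c) abc ≠ e for all a, b, c ∈ S with a ≠ b and b ≠ c; and (d) there exist a, b, c, d ∈ S with abcd = e such that the four elements e, a, ab, abc are pairwise distinct. (This is the content of the paper's Lemma that the Cayley complex of AJ_n is a cube complex: all defining relators have length four, so the minimum length of a cycle through any vertex is 4.) -/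
import Mathlib


/-- The unique element of `{1, …, n}` congruent to `z` modulo `n`. -/
def bar (n : ℕ) (z : ℤ) : ℤ := (z - 1) % n + 1

/-- The cyclic interval `[p,q]_c` in `{1, …, n}`. -/
def cyc (n : ℕ) (p q : ℤ) : Set ℤ :=
  if p < q then Set.Icc p q else Set.Icc q (n : ℤ) ∪ Set.Icc 1 p

/-- The reversal `s_{p,q}` of the cyclic interval `[p,q]_c`: it sends
`r ∈ [p,q]_c` to `(p+q-r)‾` and fixes every other `r`. -/
noncomputable def sMap (n : ℕ) (p q r : ℤ) : ℤ :=
  open Classical in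
  if r ∈ cyc n p q then bar n (p + q - r) else r

/-- The index set for the standard generators of the affine cactus group:
ordered pairs `(p,q)` with `1 ≤ p, q ≤ n` and `p ≠ q`. -/
def Gen (n : ℕ) :=
  {pq : ℤ × ℤ // 1 ≤ pq.1 ∧ pq.1 ≤ n ∧ 1 ≤ pq.2 ∧ pq.2 ≤ n ∧ pq.1 ≠ pq.2}

/-- The defining relators of the affine cactus group `AJ_n`. -/
def AJRels (n : ℕ) : Set (FreeGroup (Gen n)) :=
  {w | (∃ a : Gen n, w = FreeGroup.of a * FreeGroup.of a) ∨
    (∃ a b : Gen n,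
      cyc n a.1.1 a.1.2 ∩ cyc n b.1.1 b.1.2 = ∅ ∧
      w = FreeGroup.of a * FreeGroup.of b * (FreeGroup.of b * FreeGroup.of a)⁻¹) ∨
    (∃ a b c : Gen n,
      cyc n b.1.1 b.1.2 ⊆ cyc n a.1.1 a.1.2 ∧ b.1 ≠ a.1 ∧
      c.1.1 = sMap n a.1.1 a.1.2 b.1.2 ∧ c.1.2 = sMap n a.1.1 a.1.2 b.1.1 ∧
      w = FreeGroup.of a * FreeGroup.of b * (FreeGroup.of c * FreeGroup.of a)⁻¹)}

/-- The affine cactus group `AJ_n`. -/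
abbrev AJ (n : ℕ) := PresentedGroup (AJRels n)

/-- The standard generators `σ_{p,q}` of `AJ_n`. -/
def σAJ (n : ℕ) : Gen n → AJ n := PresentedGroup.of

/-- Word length with respect to the standard generating set
(every generator is an involution, so positive words suffice). -/
noncomputable def wl (n : ℕ) (g : AJ n) : ℕ :=
  sInf {k | ∃ w : List (Gen n), w.length = k ∧ (w.map (σAJ n)).prod = g}

/-- The word metric on `AJ_n` with respect to the standard generating set. -/
noncomputable def wdist (n : ℕ) (x y : AJ n) : ℕ := wl n (x⁻¹ * y)

-- ===== auxiliary =====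
lemma bar_cast (n : ℕ) (z : ℤ) : ((bar n z : ℤ) : ZMod n) = (z : ZMod n) := by
  unfold bar
  push_cast [ZMod.intCast_mod]
  ring

lemma left_mem_cyc (n : ℕ) (p q : ℤ) (hp : 1 ≤ p) : p ∈ cyc n p q := by
  unfold cyc
  split_ifs with h
  · exact Set.mem_Icc.2 ⟨le_refl p, le_of_lt h⟩
  · exact Or.inr (Set.mem_Icc.2 ⟨hp, le_refl p⟩)

lemma right_mem_cyc (n : ℕ) (p q : ℤ) (hq : q ≤ n) : q ∈ cyc n p q := by
  unfold cyc
  split_ifs with h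
  · exact Set.mem_Icc.2 ⟨le_of_lt h, le_refl q⟩
  · exact Or.inl (Set.mem_Icc.2 ⟨le_refl q, hq⟩)

/-- The "interval length" invariant of a generator. -/
def genDiff (n : ℕ) (g : Gen n) : ZMod n := ((g.1.2 - g.1.1 : ℤ) : ZMod n)

lemma genDiff_eq (n : ℕ) {a b c : Gen n}
    (hsub : cyc n b.1.1 b.1.2 ⊆ cyc n a.1.1 a.1.2)
    (h1 : c.1.1 = sMap n a.1.1 a.1.2 b.1.2)
    (h2 : c.1.2 = sMap n a.1.1 a.1.2 b.1.1) :
    genDiff n c = genDiff n b := by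
  have hm : b.1.1 ∈ cyc n a.1.1 a.1.2 := hsub (left_mem_cyc n _ _ b.2.1)
  have hr : b.1.2 ∈ cyc n a.1.1 a.1.2 := hsub (right_mem_cyc n _ _ b.2.2.2.2.1)
  rw [sMap, if_pos hr] at h1
  rw [sMap, if_pos hm] at h2
  unfold genDiff
  rw [h1, h2]
  push_cast [bar_cast]
  ring

/-- The map underlying the invariant homomorphism. -/
noncomputable def fΦ (n : ℕ) (g : Gen n) : Multiplicative (ZMod n → ZMod 2) :=
  Multiplicative.ofAdd (fun x => if x = genDiff n g then 1 else 0)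

/-- The invariant homomorphism. -/
noncomputable def Φ (n : ℕ) : AJ n →* Multiplicative (ZMod n → ZMod 2) :=
  PresentedGroup.toGroup (f := fΦ n) (by
    intro r hr
    rcases hr with ⟨a, rfl⟩ | ⟨a, b, _, rfl⟩ | ⟨a, b, c, hsub, _, h1, h2, rfl⟩
    · simp only [map_mul, FreeGroup.lift_apply_of, fΦ, ← ofAdd_add, ← ofAdd_zero]
      congr 1
      funext x
      exact CharTwo.add_self_eq_zero _
    · simp only [map_mul, map_inv, FreeGroup.lift_apply_of]
      rw [mul_comm (fΦ n a)]
      group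
    · simp only [map_mul, map_inv, FreeGroup.lift_apply_of]
      have : fΦ n b = fΦ n c := by
        unfold fΦ; rw [genDiff_eq n hsub h1 h2]
      rw [this, mul_comm (fΦ n a)]
      group)

/-- The parity homomorphism. -/
noncomputable def par (n : ℕ) : AJ n →* Multiplicative (ZMod 2) :=
  PresentedGroup.toGroup (f := fun _ : Gen n => Multiplicative.ofAdd 1) (by
    intro r hr
    rcases hr with ⟨a, rfl⟩ | ⟨a, b, _, rfl⟩ | ⟨a, b, c, _, _, _, _, rfl⟩ <;>
      simp only [map_mul, map_inv, FreeGroup.lift_apply_of] <;> decide)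

lemma par_σ (n : ℕ) (g : Gen n) : par n (σAJ n g) = Multiplicative.ofAdd 1 :=
  PresentedGroup.toGroup.of _

lemma Φ_σ (n : ℕ) (g : Gen n) : Φ n (σAJ n g) = fΦ n g :=
  PresentedGroup.toGroup.of _

lemma rel_one (n : ℕ) {w : FreeGroup (Gen n)} (hw : w ∈ AJRels n) :
    PresentedGroup.mk (AJRels n) w = 1 :=
  (QuotientGroup.eq_one_iff w).2 (Subgroup.subset_normalClosure hw)

lemma σ_sq (n : ℕ) (g : Gen n) : σAJ n g * σAJ n g = 1 := by
  have := rel_one n (Or.inl ⟨g, rfl⟩ : _ ∈ AJRels n)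
  rwa [map_mul] at this

/-- For `n ≥ 3`, the girth of the Cayley graph of `AJ_n` with
respect to the standard generating set `S` equals `4`: no nontrivial relation of
length `1`, `2` (without backtracking) or `3` holds, and there is an embedded
`4`-cycle. -/
theorem AJ_Cayley_girth_four (n : ℕ) (hn : 3 ≤ n) :
    (∀ a ∈ Set.range (σAJ n), a ≠ 1) ∧
    (∀ a ∈ Set.range (σAJ n), ∀ b ∈ Set.range (σAJ n), a ≠ b → a * b ≠ 1) ∧
    (∀ a ∈ Set.range (σAJ n), ∀ b ∈ Set.range (σAJ n), ∀ c ∈ Set.range (σAJ n),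
      a ≠ b → b ≠ c → a * b * c ≠ 1) ∧
    (∃ a ∈ Set.range (σAJ n), ∃ b ∈ Set.range (σAJ n),
      ∃ c ∈ Set.range (σAJ n), ∃ d ∈ Set.range (σAJ n),
      a * b * c * d = 1 ∧
      [(1 : AJ n), a, a * b, a * b * c].Pairwise (· ≠ ·)) := by
  have hn' : (3 : ℤ) ≤ (n : ℤ) := by exact_mod_cast hn
  have hodd1 : ∀ g : Gen n, σAJ n g ≠ 1 := by
    intro g h
    have h1 : par n (σAJ n g) = (1 : Multiplicative (ZMod 2)) := by rw [h, map_one]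
    rw [par_σ] at h1
    exact absurd h1 (by decide)
  have hodd3 : ∀ g g' g'' : Gen n, σAJ n g * σAJ n g' * σAJ n g'' ≠ 1 := by
    intro g g' g'' h
    have h1 : par n (σAJ n g * σAJ n g' * σAJ n g'') = (1 : Multiplicative (ZMod 2)) := by
      rw [h, map_one]
    rw [map_mul, map_mul, par_σ, par_σ, par_σ] at h1
    exact absurd h1 (by decide)
  refine ⟨?_, ?_, ?_, ?_⟩
  · rintro a ⟨g, rfl⟩
    exact hodd1 g
  · rintro a ⟨g, rfl⟩ b ⟨g', rfl⟩ hne h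
    apply hne
    rw [eq_inv_of_mul_eq_one_left h]
    exact inv_eq_of_mul_eq_one_right (σ_sq n g')
  · rintro a ⟨g, rfl⟩ b ⟨g', rfl⟩ c ⟨g'', rfl⟩ _ _
    exact hodd3 g g' g''
  -- part (d)
  · set a0 : Gen n := ⟨((1 : ℤ), (n : ℤ)), by refine ⟨?_, ?_, ?_, ?_, ?_⟩ <;> omega⟩ with ha0
    set b0 : Gen n := ⟨((1 : ℤ), (2 : ℤ)), by refine ⟨?_, ?_, ?_, ?_, ?_⟩ <;> omega⟩ with hb0
    set c0 : Gen n := ⟨(((n : ℤ) - 1), (n : ℤ)), by refine ⟨?_, ?_, ?_, ?_, ?_⟩ <;> omega⟩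
      with hc0
    have hsub : cyc n (b0.1.1) (b0.1.2) ⊆ cyc n (a0.1.1) (a0.1.2) := by
      show cyc n 1 2 ⊆ cyc n 1 n
      unfold cyc
      rw [if_pos one_lt_two, if_pos (by omega : (1:ℤ) < (n:ℤ))]
      exact Set.Icc_subset_Icc_right (by omega)
    have h2mem : (2 : ℤ) ∈ cyc n (a0.1.1) (a0.1.2) := by
      show (2:ℤ) ∈ cyc n 1 n
      unfold cyc
      rw [if_pos (by omega : (1:ℤ) < (n:ℤ))]
      exact ⟨by norm_num, by omega⟩
    have h1mem : (1 : ℤ) ∈ cyc n (a0.1.1) (a0.1.2) := by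
      show (1:ℤ) ∈ cyc n 1 n
      unfold cyc
      rw [if_pos (by omega : (1:ℤ) < (n:ℤ))]
      exact ⟨le_refl 1, by omega⟩
    have hcc1 : c0.1.1 = sMap n (a0.1.1) (a0.1.2) (b0.1.2) := by
      show (n : ℤ) - 1 = sMap n 1 n 2
      rw [sMap, if_pos h2mem]
      unfold bar
      rw [show (1 + (n:ℤ) - 2 - 1) = (n:ℤ) - 2 by ring,
        Int.emod_eq_of_lt (by omega) (by omega)]
      ring
    have hcc2 : c0.1.2 = sMap n (a0.1.1) (a0.1.2) (b0.1.1) := by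
      show (n : ℤ) = sMap n 1 n 1
      rw [sMap, if_pos h1mem]
      unfold bar
      rw [show (1 + (n:ℤ) - 1 - 1) = (n:ℤ) - 1 by ring,
        Int.emod_eq_of_lt (by omega) (by omega)]
      ring
    have hbne : b0.1 ≠ a0.1 := by
      show ((1:ℤ), (2:ℤ)) ≠ ((1:ℤ), (n:ℤ))
      intro h
      have := congrArg Prod.snd h
      simp at this
      omega
    have hrelmem : (FreeGroup.of a0 * FreeGroup.of b0 *
        (FreeGroup.of c0 * FreeGroup.of a0)⁻¹) ∈ AJRels n :=
      Or.inr (Or.inr ⟨a0, b0, c0, hsub, hbne, hcc1, hcc2, rfl⟩)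
    have hrel := rel_one n hrelmem
    rw [map_mul, map_mul, map_inv, map_mul] at hrel
    have hAB : σAJ n a0 * σAJ n b0 = σAJ n c0 * σAJ n a0 := by
      have := mul_eq_one_iff_eq_inv.1 hrel
      rwa [inv_inv] at this
    set A := σAJ n a0
    set B := σAJ n b0
    set C := σAJ n c0
    -- the invariant distinguishes a0 from b0
    haveI : NeZero n := ⟨by omega⟩
    have hkey : genDiff n a0 ≠ genDiff n b0 := by
      show (((n:ℤ) - 1 : ℤ) : ZMod n) ≠ (((2:ℤ) - 1 : ℤ) : ZMod n)
      push_cast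
      rw [ZMod.natCast_self]
      intro h
      have h2 : ((2 : ℕ) : ZMod n) = 0 := by
        push_cast
        linear_combination -h
      have := (ZMod.natCast_eq_zero_iff 2 n).1 h2
      have := Nat.le_of_dvd (by norm_num) this
      omega
    have hfne : fΦ n a0 ≠ fΦ n b0 := by
      intro h
      by_cases hc : genDiff n b0 = genDiff n a0
      · exact hkey hc.symm
      · have h2 : (fun x => if x = genDiff n a0 then (1 : ZMod 2) else 0) =
            (fun x => if x = genDiff n b0 then (1 : ZMod 2) else 0) :=
          congrArg Multiplicative.toAdd h
        have h3 := congrFun h2 (genDiff n b0)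
        rw [if_neg hc] at h3
        exact absurd (h3.trans (if_pos rfl)) (by decide)
    have hABne1 : A * B ≠ 1 := by
      intro h
      have h1 : Φ n (A * B) = Φ n 1 := congrArg (Φ n) h
      rw [map_mul, Φ_σ, Φ_σ, map_one] at h1
      have h2 : (fun x => if x = genDiff n a0 then (1 : ZMod 2) else 0) +
          (fun x => if x = genDiff n b0 then (1 : ZMod 2) else 0) = 0 :=
        congrArg Multiplicative.toAdd h1
      have h3 := congrFun h2 (genDiff n b0)
      rw [Pi.add_apply, Pi.zero_apply, if_neg (fun hc => hkey hc.symm), zero_add] at h3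
      exact absurd ((if_pos rfl).symm.trans h3) (by decide)
    refine ⟨A, ⟨a0, rfl⟩, B, ⟨b0, rfl⟩, A, ⟨a0, rfl⟩, C, ⟨c0, rfl⟩, ?_, ?_⟩
    · calc A * B * A * C = C * A * A * C := by rw [hAB]
        _ = C * (A * A) * C := by group
        _ = C * C := by rw [σ_sq n a0, mul_one]
        _ = 1 := σ_sq n c0
    · simp only [List.pairwise_cons, List.mem_cons, List.mem_singleton,
        List.not_mem_nil, forall_eq_or_imp, forall_eq, List.Pairwise.nil,
        and_true, IsEmpty.forall_iff, implies_true]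
      refine ⟨⟨?_, ?_, ?_⟩, ⟨?_, ?_⟩, ?_⟩
      · exact fun h => hodd1 a0 h.symm
      · exact fun h => hABne1 h.symm
      · intro h
        exact hodd3 a0 b0 a0 h.symm
      · intro h
        have h1 : A * 1 = A * B := by rw [mul_one]; exact h
        exact hodd1 b0 (mul_left_cancel h1).symm
      · intro h
        have h1 : A * 1 = A * (B * A) := by rw [mul_one, ← mul_assoc]; exact h
        have hBA : B * A = 1 := (mul_left_cancel h1).symm
        have hAA : A * A = 1 := σ_sq n a0
        have hBeqA : B = A :=
          (inv_eq_of_mul_eq_one_left hBA).symm.trans (inv_eq_of_mul_eq_one_left hAA)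
        have hΦ : Φ n (σAJ n b0) = Φ n (σAJ n a0) := congrArg (Φ n) hBeqA
        rw [Φ_σ, Φ_σ] at hΦ
        exact hfne hΦ.symm
      · intro h
        have h1 : (A * B) * 1 = (A * B) * A := by rw [mul_one]; exact h
        exact hodd1 a0 (mul_left_cancel h1).symm
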